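/- Let Σ be a ranked alphabet, Γ an output alphabet, and let τ₁ and τ₂ be two single-state sequential top-down tree-to-string transducers (1STS) over Σ with output in Γ*. For any set of trees D ⊆ Trees(Σ): the functions ⟦τ₁⟧ and ⟦τ₂⟧ agree on every tree of D if and only if the associated morphisms morph[τ₁], morph[τ₂] : Σ̄* → Γ* agree on every word of the language L = { yield_Σ(t) : t ∈ D }. -/
import Mathlib


/-- Trees labelled by symbols from `F`, with a finite list of children at each node. -/
inductive RTree (F : Type) : Type
  | node (f : F) (children : List (RTree F)) : RTree F

namespace RTree

mutual
  /-- The word `yield_Σ(f(t₁,…,t_k)) = (f,0)·yield_Σ(t₁)·(f,1)⋯yield_Σ(t_k)·(f,k)`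
  over the alphabet `Σ̄ = F × ℕ`. -/
  def yieldW {F : Type} : RTree F → List (F × ℕ)
    | .node f ts => (f, 0) :: yieldList f 1 ts
  def yieldList {F : Type} (f : F) : ℕ → List (RTree F) → List (F × ℕ)
    | _, [] => []
    | i, t :: ts => yieldW t ++ (f, i) :: yieldList f (i + 1) ts
end

mutual
  /-- The semantics `⟦τ⟧` of a 1STS whose constants are `δ(f) = (τ f 0, …, τ f (ar f))`:
  `⟦τ⟧(f(t₁,…,t_k)) = u₀·⟦τ⟧(t₁)·u₁⋯⟦τ⟧(t_k)·u_k`. -/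
  def sem {F Γ : Type} (τ : F → ℕ → List Γ) : RTree F → List Γ
    | .node f ts => τ f 0 ++ semList τ f 1 ts
  def semList {F Γ : Type} (τ : F → ℕ → List Γ) (f : F) : ℕ → List (RTree F) → List Γ
    | _, [] => []
    | i, t :: ts => sem τ t ++ τ f i ++ semList τ f (i + 1) ts
end

/-- A tree is a tree over the ranked alphabet `(F, ar)` if every node labelled `f`
has exactly `ar f` children. -/
inductive WellRanked {F : Type} (ar : F → ℕ) : RTree F → Prop
  | node (f : F) (ts : List (RTree F)) (hlen : ts.length = ar f)
      (hch : ∀ t ∈ ts, WellRanked ar t) : WellRanked ar (.node f ts)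

end RTree

/-- The morphism `morph[τ] : Σ̄* → Γ*` associated to a 1STS `τ`, mapping the letter
`(f,i)` to the constant `uᵢ` of `δ(f)`. -/
def morph {F Γ : Type} (τ : F → ℕ → List Γ) : FreeMonoid (F × ℕ) →* FreeMonoid Γ :=
  FreeMonoid.lift fun p => FreeMonoid.ofList (τ p.1 p.2)


mutual
theorem morph_yield {F Γ : Type} (τ : F → ℕ → List Γ) :
    ∀ t : RTree F, morph τ (FreeMonoid.ofList (RTree.yieldW t)) = FreeMonoid.ofList (RTree.sem τ t)
  | .node f ts => by
    rw [RTree.yieldW, RTree.sem, FreeMonoid.ofList_cons, FreeMonoid.ofList_append,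
      map_mul, morph_yieldList τ f 1 ts]
    rfl
theorem morph_yieldList {F Γ : Type} (τ : F → ℕ → List Γ) (f : F) :
    ∀ (i : ℕ) (ts : List (RTree F)),
      morph τ (FreeMonoid.ofList (RTree.yieldList f i ts)) = FreeMonoid.ofList (RTree.semList τ f i ts)
  | _, [] => by rfl
  | i, t :: ts => by
    rw [RTree.yieldList, RTree.semList, FreeMonoid.ofList_append, FreeMonoid.ofList_cons,
      map_mul, map_mul, morph_yield τ t, morph_yieldList τ f (i+1) ts,
      FreeMonoid.ofList_append, FreeMonoid.ofList_append]
    simp [morph, mul_assoc]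
end

/-- Two 1STSs agree on every tree of a domain `D` iff their associated morphisms agree on
every word of the language `{ yield_Σ(t) : t ∈ D }`. -/
theorem sem_eq_on_iff_morph_eq_on {F Γ : Type} (ar : F → ℕ) (τ₁ τ₂ : F → ℕ → List Γ)
    (D : Set (RTree F)) (hD : ∀ t ∈ D, RTree.WellRanked ar t) :
    (∀ t ∈ D, RTree.sem τ₁ t = RTree.sem τ₂ t) ↔
      (∀ w ∈ { w : List (F × ℕ) | ∃ t ∈ D, RTree.yieldW t = w },
        morph τ₁ (FreeMonoid.ofList w) = morph τ₂ (FreeMonoid.ofList w)) := by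

  constructor
  · rintro h w ⟨t, ht, rfl⟩
    rw [morph_yield, morph_yield, h t ht]
  · intro h t ht
    have := h (RTree.yieldW t) ⟨t, ht, rfl⟩
    rw [morph_yield, morph_yield] at this
    exact FreeMonoid.ofList.injective this
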